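/- arXiv:2509.11559 — 4 statements merged into one kernel-verified Lean document; each statement's English description precedes it below -/
import Mathlib

section
/- Let M be a valid ILA model, sp ∈ SP, op : (s_1,…,s_n) → s an operation of M, values v_i ∈ ⟦s_i⟧ and bounds α_i ∈ B_{s_i} with v_i ∈ ⟦s_i α_i⟧^sp for each i. If ⟦op⟧_bnd^topub(sp)(α_1,…,α_n) is defined and equals α, then ⟦op⟧(v_1,…,v_n) ∈ ⟦s α⟧^sp. -/
/-- The three sorts of an ILA model: messages, (encoded) plaintexts, ciphertexts. -/
inductive ILASort : Type where
  | msg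
  | plain
  | cipher
  deriving DecidableEq

/-- An ILA model (Definition 4.1 of the paper). -/
structure ILAModel where
  /-- public parameters -/
  PP : Type
  /-- secret parameters -/
  SP : Type
  topub : SP → PP
  /-- values of each sort -/
  Val : ILASort → Type
  /-- bounds for each sort -/
  Bnd : ILASort → Type
  /-- partial order on bounds -/
  ble : (s : ILASort) → Bnd s → Bnd s → Prop
  ble_refl : ∀ s b, ble s b b
  ble_trans : ∀ s b₁ b₂ b₃, ble s b₁ b₂ → ble s b₂ b₃ → ble s b₁ b₃
  ble_antisymm : ∀ s b₁ b₂, ble s b₁ b₂ → ble s b₂ b₁ → b₁ = b₂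
  bmsg : PP → Val ILASort.msg → Bnd ILASort.msg
  bplain : PP → Val ILASort.plain → Bnd ILASort.plain
  bcipher : SP → Val ILASort.cipher → Bnd ILASort.cipher
  interpPlain : PP → Val ILASort.plain → Val ILASort.msg
  interpCipher : SP → Val ILASort.cipher → Val ILASort.msg
  /-- operations -/
  Op : Type
  /-- input sorts of an operation -/
  arity : Op → List ILASort
  /-- output sort of an operation -/
  outSort : Op → ILASort
  /-- native semantics of an operation -/
  sem : (o : Op) → ((i : Fin (arity o).length) → Val ((arity o).get i)) → Val (outSort o)
  /-- partial bound map of an operation (`none` = undefined) -/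
  bnd : PP → (o : Op) → ((i : Fin (arity o).length) → Bnd ((arity o).get i)) →
    Option (Bnd (outSort o))
  /-- message-level semantics of an operation -/
  msgSem : (o : Op) → (Fin (arity o).length → Val ILASort.msg) → Val ILASort.msg

namespace ILAModel

/-- The bound of a value (needs secret parameters only for ciphertexts). -/
def boundOf (M : ILAModel) (sp : M.SP) : (s : ILASort) → M.Val s → M.Bnd s
  | ILASort.msg, v => M.bmsg (M.topub sp) v
  | ILASort.plain, v => M.bplain (M.topub sp) v
  | ILASort.cipher, v => M.bcipher sp v

/-- Interpretation into messages (identity / decode / decrypt). -/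
def interp (M : ILAModel) (sp : M.SP) : (s : ILASort) → M.Val s → M.Val ILASort.msg
  | ILASort.msg, v => v
  | ILASort.plain, v => M.interpPlain (M.topub sp) v
  | ILASort.cipher, v => M.interpCipher sp v

/-- Semantics of a type `s α`: values of sort `s` whose bound is `≤ₛ α`. -/
def tySem (M : ILAModel) (sp : M.SP) (s : ILASort) (α : M.Bnd s) : Set (M.Val s) :=
  { v | M.ble s (M.boundOf sp s v) α }

/-- A type is a pair of a sort and a bound of that sort. -/
abbrev Ty (M : ILAModel) := (s : ILASort) × M.Bnd s

/-- A runtime value is a pair of a sort and a value of that sort. -/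
abbrev Value (M : ILAModel) := (s : ILASort) × M.Val s

/-- Subtyping: `s α ≤ s α'` iff `α ≤ₛ α'`. -/
inductive TyLe (M : ILAModel) : Ty M → Ty M → Prop
  | mk (s : ILASort) (α α' : M.Bnd s) : M.ble s α α' → TyLe M ⟨s, α⟩ ⟨s, α'⟩

/-- Validity of an ILA model: Commutativity and Downwards Closedness. -/
structure Valid (M : ILAModel) : Prop where
  comm : ∀ (sp : M.SP) (o : M.Op)
      (vs : (i : Fin (M.arity o).length) → M.Val ((M.arity o).get i))
      (b : M.Bnd (M.outSort o)),
      M.bnd (M.topub sp) o (fun i => M.boundOf sp ((M.arity o).get i) (vs i)) = some b →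
      M.ble (M.outSort o) (M.boundOf sp (M.outSort o) (M.sem o vs)) b ∧
      M.interp sp (M.outSort o) (M.sem o vs) =
        M.msgSem o (fun i => M.interp sp ((M.arity o).get i) (vs i))
  down : ∀ (sp : M.SP) (o : M.Op)
      (bs bs' : (i : Fin (M.arity o).length) → M.Bnd ((M.arity o).get i))
      (b : M.Bnd (M.outSort o)),
      M.bnd (M.topub sp) o bs = some b →
      (∀ i, M.ble ((M.arity o).get i) (bs' i) (bs i)) →
      ∃ b', M.bnd (M.topub sp) o bs' = some b' ∧ M.ble (M.outSort o) b' b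

/-- in a valid ILA model, if each argument value is in the semantics of
its bound and the operator's bound map is defined on these bounds with result `α`,
then the operator's output is in the semantics of `α`. -/
theorem stmt_1 (M : ILAModel) (hM : Valid M) (sp : M.SP) (o : M.Op)
    (vs : (i : Fin (M.arity o).length) → M.Val ((M.arity o).get i))
    (αs : (i : Fin (M.arity o).length) → M.Bnd ((M.arity o).get i))
    (hv : ∀ i, vs i ∈ tySem M sp ((M.arity o).get i) (αs i))
    (α : M.Bnd (M.outSort o))
    (hdef : M.bnd (M.topub sp) o αs = some α) :
    M.sem o vs ∈ tySem M sp (M.outSort o) α := by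
  obtain ⟨b', hb', hle⟩ := hM.down sp o αs
    (fun i => M.boundOf sp ((M.arity o).get i) (vs i)) α hdef hv
  exact M.ble_trans _ _ _ _ ((hM.comm sp o vs b' hb').1) hle

end ILAModel
end

section
/- (Semantic Safety: Expressions) Let M be a valid ILA model with a distinguished nullary operator true : () → msg, and let sp ∈ SP. If topub(sp); Γ ⊢ e : τ, then for every substitution γ with sp; Γ ⊨ γ there exists a value v such that ⟨γ, e⟩ ⇓ v and v ∈ ⟦τ⟧^sp. -/
namespace ILAModel

/-- Expressions: variables, constants of sort msg/plain, operator applications. -/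
inductive Expr (M : ILAModel) : Type
  | var (x : String)
  | const (s : ILASort) (hs : s ≠ ILASort.cipher) (v : M.Val s)
  | op (o : M.Op) (args : Fin (M.arity o).length → Expr M)

/-- Substitutions map variables to values of any sort. -/
def Subst (M : ILAModel) := String → Option (Value M)

/-- Type contexts map variables to types. -/
def Ctx (M : ILAModel) := String → Option (Ty M)

/-- Big-step semantics of expressions. -/
inductive Eval (M : ILAModel) : Subst M → Expr M → Value M → Prop
  | var {γ : Subst M} {x : String} {w : Value M} :
      γ x = some w → Eval M γ (Expr.var x) w
  | const {γ : Subst M} {s : ILASort} {hs : s ≠ ILASort.cipher} {v : M.Val s} :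
      Eval M γ (Expr.const s hs v) ⟨s, v⟩
  | op {γ : Subst M} {o : M.Op} {args : Fin (M.arity o).length → Expr M}
      {vs : (i : Fin (M.arity o).length) → M.Val ((M.arity o).get i)} :
      (∀ i, Eval M γ (args i) ⟨(M.arity o).get i, vs i⟩) →
      Eval M γ (Expr.op o args) ⟨M.outSort o, M.sem o vs⟩

/-- Bound of a non-ciphertext value, computable from public parameters. -/
def boundPub (M : ILAModel) (pp : M.PP) :
    (s : ILASort) → s ≠ ILASort.cipher → M.Val s → M.Bnd s
  | ILASort.msg, _, v => M.bmsg pp v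
  | ILASort.plain, _, v => M.bplain pp v
  | ILASort.cipher, h, _ => absurd rfl h

/-- Expression typing judgment `pp; Γ ⊢ e : τ`. -/
inductive HasTy (M : ILAModel) (pp : M.PP) : Ctx M → Expr M → Ty M → Prop
  | var {Γ : Ctx M} {x : String} {τ : Ty M} :
      Γ x = some τ → HasTy M pp Γ (Expr.var x) τ
  | sub {Γ : Ctx M} {e : Expr M} {τ τ' : Ty M} :
      HasTy M pp Γ e τ → TyLe M τ τ' → HasTy M pp Γ e τ'
  | const {Γ : Ctx M} {s : ILASort} {hs : s ≠ ILASort.cipher} {v : M.Val s} :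
      HasTy M pp Γ (Expr.const s hs v) ⟨s, M.boundPub pp s hs v⟩
  | op {Γ : Ctx M} {o : M.Op} {args : Fin (M.arity o).length → Expr M}
      {bs : (i : Fin (M.arity o).length) → M.Bnd ((M.arity o).get i)}
      {α : M.Bnd (M.outSort o)} :
      (∀ i, HasTy M pp Γ (args i) ⟨(M.arity o).get i, bs i⟩) →
      M.bnd pp o bs = some α →
      HasTy M pp Γ (Expr.op o args) ⟨M.outSort o, α⟩

/-- A runtime value inhabits a type: same sort and bound below the type's bound. -/
inductive ValIn (M : ILAModel) (sp : M.SP) : Value M → Ty M → Prop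
  | mk {s : ILASort} {v : M.Val s} {α : M.Bnd s} :
      M.ble s (M.boundOf sp s v) α → ValIn M sp ⟨s, v⟩ ⟨s, α⟩

/-- `sp; Γ ⊨ γ`: every variable in `Γ` is in `γ` with a value of the right type. -/
def ModelsSubst (M : ILAModel) (sp : M.SP) (Γ : Ctx M) (γ : Subst M) : Prop :=
  ∀ x τ, Γ x = some τ → ∃ w, γ x = some w ∧ ValIn M sp w τ

/-- A distinguished nullary operator `true : () → msg`. -/
structure TrueOp (M : ILAModel) where
  op : M.Op
  harity : M.arity op = []
  hout : M.outSort op = ILASort.msg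

/-- Empty argument vector for a nullary operator. -/
def TrueOp.noArgs {M : ILAModel} (t : TrueOp M) :
    (i : Fin (M.arity t.op).length) → M.Val ((M.arity t.op).get i) :=
  fun i => absurd i.isLt (by simp [t.harity])

/-- `⟦true⟧()`: the value of the distinguished nullary operator. -/
def TrueOp.val {M : ILAModel} (t : TrueOp M) : M.Val ILASort.msg :=
  t.hout ▸ M.sem t.op t.noArgs

lemma ValIn.exists_val {M : ILAModel} {sp : M.SP} {w : Value M} {s : ILASort}
    {α : M.Bnd s} (h : ValIn M sp w ⟨s, α⟩) :
    ∃ v : M.Val s, w = ⟨s, v⟩ ∧ M.ble s (M.boundOf sp s v) α := by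
  cases h
  exact ⟨_, rfl, by assumption⟩

/-- Semantic Safety: Expressions: in a valid ILA model with a
distinguished nullary operator `true : () → msg`, if `topub(sp); Γ ⊢ e : τ` then for
every substitution `γ` with `sp; Γ ⊨ γ` there is a value `v` with `⟨γ, e⟩ ⇓ v` and
`v ∈ ⟦τ⟧^sp`. -/
theorem stmt_3 (M : ILAModel) (hM : Valid M) (t : TrueOp M) (sp : M.SP)
    (Γ : Ctx M) (e : Expr M) (τ : Ty M)
    (hty : HasTy M (M.topub sp) Γ e τ)
    (γ : Subst M) (hγ : ModelsSubst M sp Γ γ) :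
    ∃ w : Value M, Eval M γ e w ∧ ValIn M sp w τ := by
  induction hty with
  | var h =>
    obtain ⟨w, hw, hv⟩ := hγ _ _ h
    exact ⟨w, Eval.var hw, hv⟩
  | sub _ hle ih =>
    obtain ⟨w, hw, hv⟩ := ih
    obtain ⟨s, α, α', hαα'⟩ := hle
    cases hv with
    | mk h => exact ⟨_, hw, ValIn.mk (M.ble_trans _ _ _ _ h hαα')⟩
  | @const s hs v =>
    refine ⟨⟨s, v⟩, Eval.const, ValIn.mk ?_⟩
    cases s with
    | msg => exact M.ble_refl _ _
    | plain => exact M.ble_refl _ _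
    | cipher => exact absurd rfl hs
  | @op o args bs α hargs hbnd ih =>
    choose w hw hvin using ih
    choose vs heq hble using fun i => (hvin i).exists_val
    obtain ⟨b', hb', hleb⟩ := hM.down sp o bs
      (fun i => M.boundOf sp ((M.arity o).get i) (vs i)) α hbnd hble
    obtain ⟨hc1, _⟩ := hM.comm sp o vs b' hb'
    refine ⟨⟨M.outSort o, M.sem o vs⟩, Eval.op (fun i => ?_), ValIn.mk (M.ble_trans _ _ _ _ hc1 hleb)⟩
    have := hw i
    rwa [heq i] at this

end ILAModel
end

section
/- (Semantic Safety: Commands) Let M be a valid ILA model with a distinguished nullary operator true : () → msg, and let sp ∈ SP. If topub(sp); Γ ⊢ c ⊣ Γ', then for every substitution γ with sp; Γ ⊨ γ and every γ' with ⟨γ, c⟩ ⇓ γ', we have sp; Γ' ⊨ γ'. -/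
namespace ILAModel

/-- Commands. -/
inductive Cmd (M : ILAModel) : Type
  | skip
  | assign (x : String) (e : Expr M)
  | seq (c₁ c₂ : Cmd M)
  | ite (e : Expr M) (c₁ c₂ : Cmd M)

def updateS (M : ILAModel) (γ : Subst M) (x : String) (w : Value M) : Subst M :=
  fun y => if y = x then some w else γ y

/-- Big-step semantics of commands; `vt` is the value `⟦true⟧()`. -/
inductive CEval (M : ILAModel) (vt : M.Val ILASort.msg) : Subst M → Cmd M → Subst M → Prop
  | skip {γ : Subst M} : CEval M vt γ Cmd.skip γ
  | assign {γ : Subst M} {x : String} {e : Expr M} {w : Value M} :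
      Eval M γ e w → CEval M vt γ (Cmd.assign x e) (updateS M γ x w)
  | seq {γ γ₁ γ₂ : Subst M} {c₁ c₂ : Cmd M} :
      CEval M vt γ c₁ γ₁ → CEval M vt γ₁ c₂ γ₂ → CEval M vt γ (Cmd.seq c₁ c₂) γ₂
  | iteTrue {γ γ' : Subst M} {e : Expr M} {c₁ c₂ : Cmd M} :
      Eval M γ e ⟨ILASort.msg, vt⟩ → CEval M vt γ c₁ γ' →
      CEval M vt γ (Cmd.ite e c₁ c₂) γ'
  | iteFalse {γ γ' : Subst M} {e : Expr M} {c₁ c₂ : Cmd M} {w : Value M} :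
      Eval M γ e w → w ≠ ⟨ILASort.msg, vt⟩ → CEval M vt γ c₂ γ' →
      CEval M vt γ (Cmd.ite e c₁ c₂) γ'

def updateC (M : ILAModel) (Γ : Ctx M) (x : String) (τ : Ty M) : Ctx M :=
  fun y => if y = x then some τ else Γ y

/-- Context merge `Γ₁ ⊓ Γ₂ ~ Γ'`. -/
def MergeCtx (M : ILAModel) (Γ₁ Γ₂ Γ' : Ctx M) : Prop :=
  ∀ x τ, Γ' x = some τ →
    (∃ τ₁, Γ₁ x = some τ₁ ∧ TyLe M τ₁ τ) ∧ (∃ τ₂, Γ₂ x = some τ₂ ∧ TyLe M τ₂ τ)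

/-- Command typing judgment `pp; Γ ⊢ c ⊣ Γ'`. -/
inductive CHasTy (M : ILAModel) (pp : M.PP) : Ctx M → Cmd M → Ctx M → Prop
  | skip {Γ : Ctx M} : CHasTy M pp Γ Cmd.skip Γ
  | assign {Γ : Ctx M} {x : String} {e : Expr M} {τ : Ty M} :
      HasTy M pp Γ e τ → CHasTy M pp Γ (Cmd.assign x e) (updateC M Γ x τ)
  | seq {Γ Γ' Γ'' : Ctx M} {c₁ c₂ : Cmd M} :
      CHasTy M pp Γ c₁ Γ' → CHasTy M pp Γ' c₂ Γ'' → CHasTy M pp Γ (Cmd.seq c₁ c₂) Γ''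
  | ite {Γ Γ₁ Γ₂ Γ' : Ctx M} {e : Expr M} {c₁ c₂ : Cmd M} {α : M.Bnd ILASort.msg} :
      HasTy M pp Γ e ⟨ILASort.msg, α⟩ →
      CHasTy M pp Γ c₁ Γ₁ → CHasTy M pp Γ c₂ Γ₂ → MergeCtx M Γ₁ Γ₂ Γ' →
      CHasTy M pp Γ (Cmd.ite e c₁ c₂) Γ'

lemma boundPub_eq (M : ILAModel) (sp : M.SP) (s : ILASort) (hs : s ≠ ILASort.cipher)
    (v : M.Val s) : M.boundPub (M.topub sp) s hs v = M.boundOf sp s v := by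
  cases s with
  | msg => rfl
  | plain => rfl
  | cipher => exact absurd rfl hs

lemma valIn_le (M : ILAModel) (sp : M.SP) {w : Value M} {τ τ' : Ty M}
    (h : ValIn M sp w τ) (hle : TyLe M τ τ') : ValIn M sp w τ' := by
  cases h with
  | @mk s v α hb =>
    cases hle with
    | mk _ _ α' h' => exact ValIn.mk (M.ble_trans _ _ _ _ hb h')

lemma expr_safety (M : ILAModel) (hM : Valid M) (sp : M.SP)
    {Γ : Ctx M} {e : Expr M} {τ : Ty M}
    (hty : HasTy M (M.topub sp) Γ e τ)
    {γ : Subst M} (hγ : ModelsSubst M sp Γ γ)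
    {w : Value M} (hev : Eval M γ e w) : ValIn M sp w τ := by
  induction hty generalizing w with
  | var hx =>
    cases hev with
    | var hw =>
      obtain ⟨w', hw', hv⟩ := hγ _ _ hx
      rw [hw'] at hw; cases hw; exact hv
  | sub _ hle ih => exact valIn_le M sp (ih hev) hle
  | const =>
    rename_i s hs v
    cases hev
    rw [boundPub_eq]
    exact ValIn.mk (M.ble_refl _ _)
  | op hargs hbnd ih =>
    rename_i o args bs α
    cases hev with
    | op hvs =>
      rename_i vs
      have hble : ∀ i, M.ble ((M.arity o).get i)
          (M.boundOf sp ((M.arity o).get i) (vs i)) (bs i) := by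
        intro i
        have := ih i (hvs i)
        cases this with
        | mk hb => exact hb
      obtain ⟨b', hb', hble'⟩ := hM.down sp o bs
        (fun i => M.boundOf sp ((M.arity o).get i) (vs i)) α hbnd hble
      have := (hM.comm sp o vs b' hb').1
      exact ValIn.mk (M.ble_trans _ _ _ _ this hble')

/-- Semantic Safety: Commands: in a valid ILA model with a distinguished
nullary operator `true : () → msg`, if `topub(sp); Γ ⊢ c ⊣ Γ'`, `sp; Γ ⊨ γ` and
`⟨γ, c⟩ ⇓ γ'`, then `sp; Γ' ⊨ γ'`. -/
theorem stmt_4 (M : ILAModel) (hM : Valid M) (t : TrueOp M) (sp : M.SP)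
    (Γ Γ' : Ctx M) (c : Cmd M)
    (hty : CHasTy M (M.topub sp) Γ c Γ')
    (γ γ' : Subst M) (hγ : ModelsSubst M sp Γ γ)
    (hev : CEval M t.val γ c γ') :
    ModelsSubst M sp Γ' γ' := by
  induction hty generalizing γ γ' with
  | skip => cases hev; exact hγ
  | assign he =>
    rename_i x e τ
    cases hev with
    | @assign _ _ _ w hw2 =>
      intro y τ' hy
      unfold updateC at hy
      unfold updateS
      by_cases hyx : y = x
      · simp only [hyx, if_pos rfl] at hy ⊢
        cases hy
        exact ⟨w, rfl, expr_safety M hM sp he hγ hw2⟩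
      · simp only [if_neg hyx] at hy ⊢
        exact hγ y τ' hy
  | seq h₁ h₂ ih₁ ih₂ =>
    cases hev with
    | seq e₁ e₂ => exact ih₂ _ _ (ih₁ _ _ hγ e₁) e₂
  | ite he h₁ h₂ hmerge ih₁ ih₂ =>
    cases hev with
    | iteTrue hge hc =>
      have h := ih₁ _ _ hγ hc
      intro x τ hx
      obtain ⟨⟨τ₁, hτ₁, hle₁⟩, _⟩ := hmerge x τ hx
      obtain ⟨w, hw, hv⟩ := h x τ₁ hτ₁
      exact ⟨w, hw, valIn_le M sp hv hle₁⟩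
    | iteFalse hge hne hc =>
      have h := ih₂ _ _ hγ hc
      intro x τ hx
      obtain ⟨_, ⟨τ₂, hτ₂, hle₂⟩⟩ := hmerge x τ hx
      obtain ⟨w, hw, hv⟩ := h x τ₂ hτ₂
      exact ⟨w, hw, valIn_le M sp hv hle₂⟩

end ILAModel
end

section
/- (Message Equivalence: Expressions) Let M be a valid ILA model with a distinguished nullary operator true : () → msg, and let sp ∈ SP. Suppose topub(sp); Γ ⊢ e : τ and sp; Γ ⊨ γ. Then there exist values v and v_msg such that ⟨γ, e⟩ ⇓ v, ⟨interp_Γ^sp(γ), e⟩ ⇓_msg^sp v_msg, and interp_{sort(v)}^sp(v) = v_msg. -/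
namespace ILAModel

/-- Message-valued substitutions. -/
def MSubst (M : ILAModel) := String → Option (M.Val ILASort.msg)

/-- Cleartext (message-level) big-step semantics of expressions. -/
inductive MEval (M : ILAModel) (sp : M.SP) : MSubst M → Expr M → M.Val ILASort.msg → Prop
  | var {γ : MSubst M} {x : String} {v : M.Val ILASort.msg} :
      γ x = some v → MEval M sp γ (Expr.var x) v
  | const {γ : MSubst M} {s : ILASort} {hs : s ≠ ILASort.cipher} {v : M.Val s} :
      MEval M sp γ (Expr.const s hs v) (M.interp sp s v)
  | op {γ : MSubst M} {o : M.Op} {args : Fin (M.arity o).length → Expr M}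
      {vs : Fin (M.arity o).length → M.Val ILASort.msg} :
      (∀ i, MEval M sp γ (args i) (vs i)) →
      MEval M sp γ (Expr.op o args) (M.msgSem o vs)

/-- Interpretation of a runtime value at its own sort. -/
def interpV (M : ILAModel) (sp : M.SP) (w : Value M) : M.Val ILASort.msg :=
  M.interp sp w.1 w.2

/-- `interp_Γ^sp(γ)`: the message-level substitution obtained by interpreting `γ`
on the domain of `Γ`. -/
def interpSubst (M : ILAModel) (sp : M.SP) (Γ : Ctx M) (γ : Subst M) : MSubst M :=
  fun x => (Γ x).bind fun _ => (γ x).map (M.interpV sp)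

lemma valIn_inv (M : ILAModel) (sp : M.SP) {w : Value M} {s : ILASort} {α : M.Bnd s}
    (h : ValIn M sp w ⟨s, α⟩) :
    ∃ v : M.Val s, w = ⟨s, v⟩ ∧ M.ble s (M.boundOf sp s v) α := by
  cases h with
  | mk hb => exact ⟨_, rfl, hb⟩

lemma stmt_6_aux (M : ILAModel) (hM : Valid M) (sp : M.SP)
    (Γ : Ctx M) (e : Expr M) (τ : Ty M)
    (hty : HasTy M (M.topub sp) Γ e τ)
    (γ : Subst M) (hγ : ModelsSubst M sp Γ γ) :
    ∃ (w : Value M) (vmsg : M.Val ILASort.msg),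
      Eval M γ e w ∧
      MEval M sp (interpSubst M sp Γ γ) e vmsg ∧
      interpV M sp w = vmsg ∧ ValIn M sp w τ := by
  induction hty with
  | @var x τ' hx =>
    obtain ⟨w, hw, hin⟩ := hγ x τ' hx
    refine ⟨w, M.interpV sp w, Eval.var hw, MEval.var ?_, rfl, hin⟩
    simp [interpSubst, hx, hw]
  | sub h hle ih =>
    obtain ⟨w, vmsg, h1, h2, h3, h4⟩ := ih
    refine ⟨w, vmsg, h1, h2, h3, ?_⟩
    cases hle with
    | mk s α α' hαα' =>
      obtain ⟨v, rfl, hb⟩ := valIn_inv M sp h4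
      exact ValIn.mk (M.ble_trans _ _ _ _ hb hαα')
  | @const s hs v =>
    refine ⟨⟨s, v⟩, M.interp sp s v, Eval.const, MEval.const, rfl, ValIn.mk ?_⟩
    cases s with
    | msg => exact M.ble_refl _ _
    | plain => exact M.ble_refl _ _
    | cipher => exact absurd rfl hs
  | @op o args bs α hargs hbnd ih =>
    choose w vmsg h1 h2 h3 h4 using fun i => ih i
    choose vs hw hb using fun i => valIn_inv M sp (h4 i)
    obtain ⟨b', hbnd', hble'⟩ := hM.down sp o bs
      (fun i => M.boundOf sp ((M.arity o).get i) (vs i)) α hbnd hb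
    obtain ⟨hb1, hb2⟩ := hM.comm sp o vs b' hbnd'
    refine ⟨⟨M.outSort o, M.sem o vs⟩,
      M.msgSem o (fun i => M.interp sp ((M.arity o).get i) (vs i)),
      Eval.op (fun i => (hw i) ▸ h1 i),
      MEval.op (fun i => ?_), hb2, ValIn.mk (M.ble_trans _ _ _ _ hb1 hble')⟩
    have := h2 i
    have h3i : M.interpV sp (w i) = vmsg i := h3 i
    rw [hw i] at h3i
    rw [← h3i] at this
    exact this

/-- Message Equivalence: Expressions: if `topub(sp); Γ ⊢ e : τ` and
`sp; Γ ⊨ γ`, then `e` evaluates both homomorphically (to `w`) and in cleartext on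
the interpreted substitution (to `v_msg`), and interpreting `w` at its sort yields
`v_msg`. -/
theorem stmt_6 (M : ILAModel) (hM : Valid M) (t : TrueOp M) (sp : M.SP)
    (Γ : Ctx M) (e : Expr M) (τ : Ty M)
    (hty : HasTy M (M.topub sp) Γ e τ)
    (γ : Subst M) (hγ : ModelsSubst M sp Γ γ) :
    ∃ (w : Value M) (vmsg : M.Val ILASort.msg),
      Eval M γ e w ∧
      MEval M sp (interpSubst M sp Γ γ) e vmsg ∧
      interpV M sp w = vmsg := by
  obtain ⟨w, vmsg, h1, h2, h3, _⟩ := stmt_6_aux M hM sp Γ e τ hty γ hγ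
  exact ⟨w, vmsg, h1, h2, h3⟩

end ILAModel
end
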